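/- For α ≥ 0 and τ ∈ ℝ with σ := 1/√(1+τ²), ∫_0^α φ(τx)·φ(x) dx = σ·φ(0)·(Φ(α/σ) − 1/2). -/

import Mathlib

open MeasureTheory

/-- Standard normal pdf. -/
noncomputable def gpdf (x : ℝ) : ℝ := (Real.sqrt (2 * Real.pi))⁻¹ * Real.exp (-x ^ 2 / 2)

/-- Standard normal cdf. -/
noncomputable def gcdf (x : ℝ) : ℝ := ∫ t in Set.Iic x, gpdf t

/-!
Completing the square, `φ(τx) φ(x) = φ(0) φ(√(1+τ²) x)`, so the substitution `y = √(1+τ²) x`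
turns the integral into `σ φ(0) ∫₀^{α/σ} φ`, and `∫₀^b φ = Φ(b) - Φ(0) = Φ(b) - 1/2` by symmetry.
-/

lemma gpdf_eq_gaussianPDFReal : gpdf = ProbabilityTheory.gaussianPDFReal 0 1 := by
  ext x
  simp [gpdf, ProbabilityTheory.gaussianPDFReal]

lemma integrable_gpdf : Integrable gpdf :=
  gpdf_eq_gaussianPDFReal ▸ ProbabilityTheory.integrable_gaussianPDFReal 0 1

lemma integral_gpdf : ∫ x, gpdf x = 1 :=
  gpdf_eq_gaussianPDFReal ▸ ProbabilityTheory.integral_gaussianPDFReal_eq_one 0 one_ne_zero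

lemma gpdf_neg (x : ℝ) : gpdf (-x) = gpdf x := by
  simp [gpdf]

lemma gpdf_mul_gpdf {a b c : ℝ} (h : a ^ 2 + b ^ 2 = c ^ 2) :
    gpdf a * gpdf b = gpdf 0 * gpdf c := by
  simp only [gpdf, mul_mul_mul_comm _ (Real.exp _), ← Real.exp_add]
  congr 2
  linear_combination -h / 2

lemma gcdf_zero : gcdf 0 = 1 / 2 := by
  have h_symm : ∫ x in Set.Ioi 0, gpdf x = gcdf 0 := by
    simpa [gpdf_neg, gcdf] using (integral_comp_neg_Iic (0 : ℝ) gpdf).symm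
  have h_total : gcdf 0 + ∫ x in Set.Ioi 0, gpdf x = 1 := by
    rw [gcdf, intervalIntegral.integral_Iic_add_Ioi integrable_gpdf.integrableOn
      integrable_gpdf.integrableOn, integral_gpdf]
  linarith

lemma integral_gpdf_eq_gcdf_sub (a b : ℝ) : ∫ x in a..b, gpdf x = gcdf b - gcdf a :=
  (intervalIntegral.integral_Iic_sub_Iic integrable_gpdf.integrableOn
    integrable_gpdf.integrableOn).symm

lemma integral_zero_gpdf_comp_mul {c : ℝ} (hc : c ≠ 0) (b : ℝ) :
    ∫ x in (0 : ℝ)..b, gpdf (c * x) = c⁻¹ * (gcdf (c * b) - 1 / 2) := by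
  rw [intervalIntegral.integral_comp_mul_left _ hc, mul_zero, integral_gpdf_eq_gcdf_sub,
    gcdf_zero, smul_eq_mul]

theorem stmt13_general (α τ : ℝ) :
    let σ : ℝ := 1 / Real.sqrt (1 + τ ^ 2)
    (∫ x in (0 : ℝ)..α, gpdf (τ * x) * gpdf x) = σ * gpdf 0 * (gcdf (α / σ) - 1 / 2) := by
  intro σ
  set s := Real.sqrt (1 + τ ^ 2)
  have hs_sq : s ^ 2 = 1 + τ ^ 2 := Real.sq_sqrt (by positivity)
  have hs : s ≠ 0 := (Real.sqrt_pos.mpr (by positivity)).ne'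
  have h_square (x : ℝ) : gpdf (τ * x) * gpdf x = gpdf 0 * gpdf (s * x) :=
    gpdf_mul_gpdf (by linear_combination -x ^ 2 * hs_sq)
  rw [intervalIntegral.integral_congr fun x _ ↦ h_square x, intervalIntegral.integral_const_mul,
    integral_zero_gpdf_comp_mul hs, show α / σ = s * α by simp [σ, s, mul_comm]]
  simp only [σ]
  ring

/-- For α ≥ 0, τ ∈ ℝ, σ = 1/√(1+τ²),
∫₀^α φ(τx)φ(x)dx = σφ(0)(Φ(α/σ) − 1/2). -/
theorem stmt13 (α τ : ℝ) (hα : 0 ≤ α) :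
    let σ : ℝ := 1 / Real.sqrt (1 + τ ^ 2)
    (∫ x in (0 : ℝ)..α, gpdf (τ * x) * gpdf x) = σ * gpdf 0 * (gcdf (α / σ) - 1 / 2) :=
  stmt13_general α τ
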